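/- arXiv:1607.01114 — 5 statements merged into one kernel-verified Lean document; each statement's English description precedes it below -/
import Mathlib

section
/- Let R be a commutative ring with unity and M an R-module. If (f_1, ..., f_t) ∈ R^t is an M-regular sequence, then for every integer n > 0 the sequence (f_1^n, ..., f_t^n) is also an M-regular sequence. -/
/-!
If `r` is `M`-regular, multiplication by `r` fits into short exact sequences
`0 → M/rⁿM → M/rⁿ⁺¹M → M/rM → 0`. Weak regularity of a sequence passes to extensions,
so by induction on `n` (starting from the zero module `M/r⁰M`) a sequence that is weakly
regular on `M/rM` is weakly regular on every `M/rⁿM`. Since `rⁿ` is again `M`-regular,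
induction along the sequence shows that `(f₁ⁿ, …, f_tⁿ)` is weakly regular on `M`; and
`M ≠ (f₁ⁿ, …, f_tⁿ)M` because `(f₁ⁿ, …, f_tⁿ) ⊆ (f₁, …, f_t)` for `n > 0`.
-/

open RingTheory.Sequence Submodule Function

open scoped Pointwise

section

variable {R : Type*} [CommRing R]

lemma QuotSMulTop.map_injective {A B C : Type*} [AddCommGroup A] [Module R A]
    [AddCommGroup B] [Module R B] [AddCommGroup C] [Module R C] {r : R}
    {f : A →ₗ[R] B} {g : B →ₗ[R] C} (hf : Injective f) (hfg : Exact f g)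
    (hC : IsSMulRegular C r) : Injective (QuotSMulTop.map r f) := by
  rw [← LinearMap.exact_zero_iff_injective A] at hf ⊢
  simpa using QuotSMulTop.map_first_exact_on_four_term_exact_of_isSMulRegular_last hf hfg hC

namespace RingTheory.Sequence.IsWeaklyRegular

lemma of_subsingleton (M : Type*) [AddCommGroup M] [Module R M] [Subsingleton M]
    (rs : List R) : IsWeaklyRegular M rs :=
  ⟨fun _ _ _ _ _ => Subsingleton.elim _ _⟩

lemma of_injective_of_exact_of_surjective {A B C : Type*} [AddCommGroup A] [Module R A]
    [AddCommGroup B] [Module R B] [AddCommGroup C] [Module R C]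
    {rs : List R} {f : A →ₗ[R] B} {g : B →ₗ[R] C}
    (hf : Injective f) (hfg : Exact f g) (hg : Surjective g)
    (hA : IsWeaklyRegular A rs) (hC : IsWeaklyRegular C rs) : IsWeaklyRegular B rs := by
  induction rs generalizing A B C with
  | nil => exact .nil R B
  | cons r rs ih =>
    rw [isWeaklyRegular_cons_iff] at hA hC ⊢
    refine ⟨isSMulRegular_of_range_eq_ker hf hfg.linearMap_ker_eq.symm hA.1 hC.1, ?_⟩
    exact ih (QuotSMulTop.map_injective hf hfg hC.1) (QuotSMulTop.map_exact r hfg hg)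
      (QuotSMulTop.map_surjective r hg) hA.2 hC.2

end RingTheory.Sequence.IsWeaklyRegular

section PowSMulTop

variable {M : Type*} [AddCommGroup M] [Module R M] {r : R}

lemma Submodule.mem_smul_top_iff_exists_smul_eq {x : M} :
    x ∈ (r • ⊤ : Submodule R M) ↔ ∃ y : M, r • y = x := by
  simp [mem_smul_pointwise_iff_exists]

lemma Submodule.pow_succ_smul_top_le_smul_top (n : ℕ) :
    (r ^ (n + 1) • ⊤ : Submodule R M) ≤ r • ⊤ := by
  intro x hx
  obtain ⟨y, rfl⟩ := mem_smul_top_iff_exists_smul_eq.mp hx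
  exact mem_smul_top_iff_exists_smul_eq.mpr ⟨r ^ n • y, by rw [smul_smul, ← pow_succ']⟩

lemma Submodule.pow_smul_top_le_comap_lsmul_pow_succ_smul_top (n : ℕ) :
    (r ^ n • ⊤ : Submodule R M) ≤
      (r ^ (n + 1) • ⊤ : Submodule R M).comap (LinearMap.lsmul R M r) := by
  intro x hx
  obtain ⟨y, rfl⟩ := mem_smul_top_iff_exists_smul_eq.mp hx
  exact mem_smul_top_iff_exists_smul_eq.mpr ⟨y, by rw [pow_succ', mul_smul]; rfl⟩

lemma exists_shortExact_quot_pow_smul_top (hr : IsSMulRegular M r) (n : ℕ) :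
    ∃ (f : (M ⧸ (r ^ n • ⊤ : Submodule R M)) →ₗ[R]
        M ⧸ (r ^ (n + 1) • ⊤ : Submodule R M))
      (g : (M ⧸ (r ^ (n + 1) • ⊤ : Submodule R M)) →ₗ[R] QuotSMulTop r M),
      Injective f ∧ Exact f g ∧ Surjective g := by
  refine ⟨mapQ _ _ _ (pow_smul_top_le_comap_lsmul_pow_succ_smul_top n),
    factor (pow_succ_smul_top_le_smul_top n), ?_, ?_, factor_surjective _⟩
  · rw [← LinearMap.ker_eq_bot, eq_bot_iff]
    intro x hx
    obtain ⟨a, rfl⟩ := Submodule.Quotient.mk_surjective _ x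
    rw [LinearMap.mem_ker, mapQ_apply, Submodule.Quotient.mk_eq_zero,
      mem_smul_top_iff_exists_smul_eq] at hx
    obtain ⟨y, hy⟩ := hx
    rw [pow_succ', mul_smul] at hy
    rw [mem_bot, Submodule.Quotient.mk_eq_zero, ← hr hy]
    exact mem_smul_top_iff_exists_smul_eq.mpr ⟨y, rfl⟩
  · intro x
    constructor
    · obtain ⟨a, rfl⟩ := mkQ_surjective _ x
      rw [factor_mk, mkQ_apply, Submodule.Quotient.mk_eq_zero, mem_smul_top_iff_exists_smul_eq]
      rintro ⟨y, rfl⟩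
      exact ⟨Submodule.Quotient.mk y, rfl⟩
    · rintro ⟨y, rfl⟩
      obtain ⟨y, rfl⟩ := mkQ_surjective _ y
      rw [mkQ_apply, mapQ_apply, ← mkQ_apply, factor_mk, mkQ_apply,
        Submodule.Quotient.mk_eq_zero]
      exact mem_smul_top_iff_exists_smul_eq.mpr ⟨y, rfl⟩

end PowSMulTop

namespace RingTheory.Sequence.IsWeaklyRegular

variable {M : Type*} [AddCommGroup M] [Module R M]

lemma quot_pow_smul_top {r : R} {rs : List R} (hr : IsSMulRegular M r)
    (h : IsWeaklyRegular (QuotSMulTop r M) rs) (n : ℕ) :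
    IsWeaklyRegular (M ⧸ (r ^ n • ⊤ : Submodule R M)) rs := by
  induction n with
  | zero =>
    have : Subsingleton (M ⧸ (r ^ 0 • ⊤ : Submodule R M)) := by
      rw [pow_zero, one_smul]
      infer_instance
    exact of_subsingleton _ rs
  | succ n ih =>
    obtain ⟨f, g, hf, hfg, hg⟩ := exists_shortExact_quot_pow_smul_top hr n
    exact of_injective_of_exact_of_surjective hf hfg hg ih h

lemma map_pow {rs : List R} (h : IsWeaklyRegular M rs) (n : ℕ) :
    IsWeaklyRegular M (rs.map (· ^ n)) := by
  induction rs generalizing M with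
  | nil => exact .nil R M
  | cons r rs ih =>
    rw [isWeaklyRegular_cons_iff] at h
    exact .cons (h.1.pow n) (ih (quot_pow_smul_top h.1 h.2 n))

end RingTheory.Sequence.IsWeaklyRegular

lemma Ideal.ofList_map_pow_le (rs : List R) {n : ℕ} (hn : n ≠ 0) :
    Ideal.ofList (rs.map (· ^ n)) ≤ Ideal.ofList rs := by
  rw [Ideal.ofList, Ideal.span_le]
  intro x hx
  obtain ⟨r, hr, rfl⟩ := List.mem_map.mp hx
  exact Ideal.pow_mem_of_mem (Ideal.ofList rs) (Ideal.subset_span hr) n (Nat.pos_of_ne_zero hn)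

end

/-- Let `R` be a commutative ring with unity and `M` an `R`-module.
If `(f₁, …, f_t)` is an `M`-regular sequence, then for every `n > 0` the sequence
`(f₁ⁿ, …, f_tⁿ)` is also an `M`-regular sequence. -/
theorem power_of_regular_sequence_is_regular
    {R M : Type*} [CommRing R] [AddCommGroup M] [Module R M]
    (rs : List R) (h : RingTheory.Sequence.IsRegular M rs) (n : ℕ) (hn : 0 < n) :
    RingTheory.Sequence.IsRegular M (rs.map (· ^ n)) := by
  refine ⟨h.toIsWeaklyRegular.map_pow n, fun htop => h.top_ne_smul (top_le_iff.mp ?_).symm⟩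
  calc (⊤ : Submodule R M) = Ideal.ofList (rs.map (· ^ n)) • ⊤ := htop
    _ ≤ Ideal.ofList rs • ⊤ := smul_mono_left (Ideal.ofList_map_pow_le rs hn.ne')
end

section
/- Let K be a field, S = K[X_1, ..., X_n], I = ⟨f_1, ..., f_s⟩ an ideal of S, and f ∈ S. Then f belongs to the radical of I if and only if 1 belongs to the ideal ⟨f_1, ..., f_s, 1 - Y·f⟩ of the polynomial ring S' = K[X_1, ..., X_n, Y]. -/
/-!
Reduce modulo `I`: the kernel of `R[Y] → (R ⧸ I)[Y]` is `I·R[Y]`, so the ideal `I·R[Y] + (1 - Y f)`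
is the unit ideal exactly when `1 - Y f̄` is a unit of `(R ⧸ I)[Y]`. A polynomial with unit
constant term is a unit iff its other coefficients are nilpotent, so this says that `f̄` is
nilpotent in `R ⧸ I`, i.e. `f ∈ √I`.
-/

open Polynomial

theorem Polynomial.isUnit_one_sub_X_mul_C_iff {R : Type*} [CommRing R] {a : R} :
    IsUnit (1 - X * C a) ↔ IsNilpotent a := by
  rw [show (1 - X * C a : R[X]) = C 1 + X * C (-a) by simp [sub_eq_add_neg],
    isUnit_C_add_X_mul_iff, isNilpotent_C_iff, isNilpotent_neg_iff]
  exact and_iff_right isUnit_one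

theorem Ideal.isNilpotent_quotient_mk_iff {R : Type*} [CommRing R] {I : Ideal R} {x : R} :
    IsNilpotent (Ideal.Quotient.mk I x) ↔ x ∈ I.radical := by
  simp only [IsNilpotent, ← map_pow, Ideal.Quotient.eq_zero_iff_mem, Ideal.mem_radical_iff]

theorem Ideal.map_eq_top_iff_of_surjective_of_ker_le {R S : Type*} [CommRing R] [CommRing S]
    {φ : R →+* S} (hφ : Function.Surjective φ) {J : Ideal R} (hJ : RingHom.ker φ ≤ J) :
    J.map φ = ⊤ ↔ J = ⊤ := by
  rw [← Ideal.comap_eq_top_iff (f := φ), Ideal.comap_map_of_surjective' φ hφ, sup_eq_left.mpr hJ]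

theorem Ideal.mem_radical_iff_one_mem_map_C_sup_span {R : Type*} [CommRing R] (I : Ideal R)
    (f : R) : f ∈ I.radical ↔ (1 : R[X]) ∈ I.map C ⊔ Ideal.span {1 - X * C f} := by
  set φ := mapRingHom (Ideal.Quotient.mk I)
  have hker : RingHom.ker φ = I.map C := by rw [ker_mapRingHom, Ideal.mk_ker]
  have hmap : (I.map C ⊔ Ideal.span {1 - X * C f}).map φ =
      Ideal.span {1 - X * C (Ideal.Quotient.mk I f)} := by
    rw [Ideal.map_sup, (Ideal.map_eq_bot_iff_le_ker φ).mpr hker.ge, bot_sup_eq, Ideal.map_span,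
      Set.image_singleton]
    simp [φ]
  rw [← Ideal.eq_top_iff_one, ← Ideal.map_eq_top_iff_of_surjective_of_ker_le
    (map_surjective _ Ideal.Quotient.mk_surjective) (hker.trans_le le_sup_left), hmap,
    Ideal.span_singleton_eq_top, isUnit_one_sub_X_mul_C_iff, Ideal.isNilpotent_quotient_mk_iff]

/-- **Rabinowitsch trick / radical membership.**
Let `K` be a field, `S = K[X₁, …, Xₙ]`, `I = ⟨f₁, …, f_s⟩` an ideal of `S` and
`f ∈ S`.  Then `f` belongs to the radical of `I` iff `1` belongs to the ideal
`⟨f₁, …, f_s, 1 - Y·f⟩` of `S' = K[X₁, …, Xₙ, Y]`. -/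
theorem radical_membership_iff_one_mem
    {K : Type*} [Field K] {n s : ℕ}
    (F : Fin s → MvPolynomial (Fin n) K) (f : MvPolynomial (Fin n) K) :
    f ∈ (Ideal.span (Set.range F)).radical ↔
      (1 : Polynomial (MvPolynomial (Fin n) K)) ∈
        Ideal.span
          (Set.range (fun i => Polynomial.C (F i)) ∪
            {1 - Polynomial.X * Polynomial.C f}) := by
  rw [Ideal.span_union, Set.range_comp' Polynomial.C F, ← Ideal.map_span]
  exact Ideal.mem_radical_iff_one_mem_map_C_sup_span _ f
end

section
/- Let K be a field of characteristic not 2 with ε ∈ K not a square, and let V be the K-vector space of homogeneous cubic polynomials in two variables y, z. For a, b ∈ K, let R(a,b) act on V by the substitution y ↦ a·y + ε·b·z, z ↦ b·y + a·z followed by multiplication by (a² - ε b²). Then the subspaces V₁ = span{y(y² - εz²), z(y² - εz²)} and V₂ = span{y(y² + 3εz²), z(3y² + εz²)} are invariant under all R(a,b) with a² - εb² ≠ 0, and V = V₁ ⊕ V₂. -/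
open MvPolynomial

section Aux

variable {K : Type*} [Field K]

private lemma key_statement (hch : ringChar K ≠ 2)
    (ε : K) (hε : ε ≠ 0) :
    let S := MvPolynomial (Fin 2) K
    let y : S := X 0
    let z : S := X 1
    let V₁ : Submodule K S :=
      Submodule.span K {y * (y ^ 2 - C ε * z ^ 2), z * (y ^ 2 - C ε * z ^ 2)}
    let V₂ : Submodule K S :=
      Submodule.span K {y * (y ^ 2 + 3 * C ε * z ^ 2), z * (3 * y ^ 2 + C ε * z ^ 2)}
    let act : K → K → S → S := fun a b P =>
      C (a ^ 2 - ε * b ^ 2) *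
        (aeval ![C a * y + C (ε * b) * z, C b * y + C a * z] P)
    (∀ a b : K, a ^ 2 - ε * b ^ 2 ≠ 0 →
        (∀ P ∈ V₁, act a b P ∈ V₁) ∧ (∀ P ∈ V₂, act a b P ∈ V₂)) ∧
      V₁ ⊔ V₂ = homogeneousSubmodule (Fin 2) K 3 ∧ V₁ ⊓ V₂ = ⊥ := by
  intro S y z V₁ V₂ act
  have h2 : (2:K) ≠ 0 := Ring.two_ne_zero hch
  have h4 : (4:K) ≠ 0 := by
    have h : (4:K) = 2*2 := by norm_num
    rw [h]; exact mul_ne_zero h2 h2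
  set e1 : S := y * (y ^ 2 - C ε * z ^ 2) with he1
  set e2 : S := z * (y ^ 2 - C ε * z ^ 2) with he2
  set f1 : S := y * (y ^ 2 + 3 * C ε * z ^ 2) with hf1
  set f2 : S := z * (3 * y ^ 2 + C ε * z ^ 2) with hf2
  have he1m : e1 ∈ V₁ := Submodule.subset_span (Set.mem_insert _ _)
  have he2m : e2 ∈ V₁ := Submodule.subset_span (Set.mem_insert_of_mem _ rfl)
  have hf1m : f1 ∈ V₂ := Submodule.subset_span (Set.mem_insert _ _)
  have hf2m : f2 ∈ V₂ := Submodule.subset_span (Set.mem_insert_of_mem _ rfl)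
  refine ⟨?_, ?_, ?_⟩
  · -- invariance
    intro a b hab
    have A1 : act a b e1 = ((a^2-ε*b^2)^2*a) • e1 + ((a^2-ε*b^2)^2*(ε*b)) • e2 := by
      rw [smul_eq_C_mul, smul_eq_C_mul]
      simp only [act, he1, he2, y, z, map_mul, map_sub, map_add, map_pow, aeval_X, aeval_C,
        algebraMap_eq, Matrix.cons_val_zero, Matrix.cons_val_one, Matrix.head_cons]
      ring
    have A2 : act a b e2 = ((a^2-ε*b^2)^2*b) • e1 + ((a^2-ε*b^2)^2*a) • e2 := by
      rw [smul_eq_C_mul, smul_eq_C_mul]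
      simp only [act, he1, he2, y, z, map_mul, map_sub, map_add, map_pow, aeval_X, aeval_C,
        algebraMap_eq, Matrix.cons_val_zero, Matrix.cons_val_one, Matrix.head_cons]
      ring
    have A3 : act a b f1 = ((a^2-ε*b^2)*(a^3+3*ε*a*b^2)) • f1
        + ((a^2-ε*b^2)*(ε*(3*a^2*b+ε*b^3))) • f2 := by
      rw [smul_eq_C_mul, smul_eq_C_mul]
      simp only [act, hf1, hf2, y, z, map_mul, map_sub, map_add, map_pow, aeval_X, aeval_C,
        algebraMap_eq, Matrix.cons_val_zero, Matrix.cons_val_one, Matrix.head_cons,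
        map_ofNat]
      ring
    have A4 : act a b f2 = ((a^2-ε*b^2)*(3*a^2*b+ε*b^3)) • f1
        + ((a^2-ε*b^2)*(a^3+3*ε*a*b^2)) • f2 := by
      rw [smul_eq_C_mul, smul_eq_C_mul]
      simp only [act, hf1, hf2, y, z, map_mul, map_sub, map_add, map_pow, aeval_X, aeval_C,
        algebraMap_eq, Matrix.cons_val_zero, Matrix.cons_val_one, Matrix.head_cons,
        map_ofNat]
      ring
    have hlin : ∀ (m n : K) (u v : S), act a b (m • u + n • v)
        = m • act a b u + n • act a b v := by
      intro m n u v
      simp only [act, map_add, map_smul, mul_add, mul_smul_comm]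
    constructor
    · rintro P hP
      obtain ⟨m, n, rfl⟩ := Submodule.mem_span_pair.mp hP
      rw [hlin, A1, A2]
      exact Submodule.add_mem _
        (Submodule.smul_mem _ _ (Submodule.add_mem _
          (Submodule.smul_mem _ _ he1m) (Submodule.smul_mem _ _ he2m)))
        (Submodule.smul_mem _ _ (Submodule.add_mem _
          (Submodule.smul_mem _ _ he1m) (Submodule.smul_mem _ _ he2m)))
    · rintro P hP
      obtain ⟨m, n, rfl⟩ := Submodule.mem_span_pair.mp hP
      rw [hlin, A3, A4]
      exact Submodule.add_mem _
        (Submodule.smul_mem _ _ (Submodule.add_mem _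
          (Submodule.smul_mem _ _ hf1m) (Submodule.smul_mem _ _ hf2m)))
        (Submodule.smul_mem _ _ (Submodule.add_mem _
          (Submodule.smul_mem _ _ hf1m) (Submodule.smul_mem _ _ hf2m)))
  · -- the sup
    apply le_antisymm
    · have hy : IsHomogeneous (y:S) 1 := isHomogeneous_X _ _
      have hz : IsHomogeneous (z:S) 1 := isHomogeneous_X _ _
      have hq1 : IsHomogeneous ((y:S) ^ 2 - C ε * z ^ 2) 2 := by
        have := ((hy.pow 2).sub ((isHomogeneous_C (Fin 2) ε).mul (hz.pow 2)))
        simpa using this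
      have hq2 : IsHomogeneous ((3:S) * C ε * (z:S) ^ 2 + (y:S) ^ 2) 2 := by
        have h3 : (3:S) * C ε = C (3*ε) := by rw [map_mul, map_ofNat]
        rw [h3]
        have := ((isHomogeneous_C (Fin 2) (3*ε)).mul (hz.pow 2)).add (hy.pow 2)
        simpa using this
      have hq3 : IsHomogeneous ((3:S) * (y:S) ^ 2 + C ε * (z:S) ^ 2) 2 := by
        have h3 : (3:S) * (y:S)^2 = C (3:K) * y^2 := by rw [map_ofNat]
        rw [h3]
        have := ((isHomogeneous_C (Fin 2) (3:K)).mul (hy.pow 2)).add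
          ((isHomogeneous_C (Fin 2) ε).mul (hz.pow 2))
        simpa using this
      refine sup_le (Submodule.span_le.mpr ?_) (Submodule.span_le.mpr ?_) <;>
        rintro P (rfl | rfl) <;> rw [SetLike.mem_coe, mem_homogeneousSubmodule]
      · simpa using hy.mul hq1
      · simpa using hz.mul hq1
      · have : (y:S) * (y ^ 2 + 3 * C ε * z ^ 2) = y * (3 * C ε * z ^ 2 + y ^ 2) := by ring
        rw [this]; simpa using hy.mul hq2
      · simpa using hz.mul hq3
    · -- homogeneous cubics are spanned
      have hm1 : (X 0 : S)^3 ∈ V₁ ⊔ V₂ := by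
        have hB : (4:K) • (X 0 : S)^3 = (3:K) • e1 + f1 := by
          rw [smul_eq_C_mul, smul_eq_C_mul, he1, hf1]
          simp only [y, z, map_ofNat]
          ring
        have : (X 0 : S)^3 = (4:K)⁻¹ • ((3:K) • e1 + f1) := by
          rw [← hB, smul_smul, inv_mul_cancel₀ h4, one_smul]
        rw [this]
        exact Submodule.smul_mem _ _ (Submodule.add_mem _
          (Submodule.smul_mem _ _ (Submodule.mem_sup_left he1m))
          (Submodule.mem_sup_right hf1m))
      have hm2 : (X 0 : S)^2 * (X 1 : S) ∈ V₁ ⊔ V₂ := by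
        have hB : (4:K) • ((X 0 : S)^2 * X 1) = e2 + f2 := by
          rw [smul_eq_C_mul, he2, hf2]
          simp only [y, z, map_ofNat]
          ring
        have : (X 0 : S)^2 * X 1 = (4:K)⁻¹ • (e2 + f2) := by
          rw [← hB, smul_smul, inv_mul_cancel₀ h4, one_smul]
        rw [this]
        exact Submodule.smul_mem _ _ (Submodule.add_mem _
          (Submodule.mem_sup_left he2m) (Submodule.mem_sup_right hf2m))
      have h4e : (4*ε : K) ≠ 0 := mul_ne_zero h4 hε
      have hm3 : (X 0 : S) * (X 1 : S)^2 ∈ V₁ ⊔ V₂ := by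
        have hB : (4*ε:K) • ((X 0 : S) * (X 1 : S)^2) = (-1:K) • e1 + f1 := by
          rw [smul_eq_C_mul, smul_eq_C_mul, he1, hf1]
          simp only [y, z, map_mul, map_neg, map_one, map_ofNat]
          ring
        have : (X 0 : S) * (X 1 : S)^2 = (4*ε:K)⁻¹ • ((-1:K) • e1 + f1) := by
          rw [← hB, smul_smul, inv_mul_cancel₀ h4e, one_smul]
        rw [this]
        exact Submodule.smul_mem _ _ (Submodule.add_mem _
          (Submodule.smul_mem _ _ (Submodule.mem_sup_left he1m))
          (Submodule.mem_sup_right hf1m))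
      have hm4 : (X 1 : S)^3 ∈ V₁ ⊔ V₂ := by
        have hB : (4*ε:K) • (X 1 : S)^3 = (-3:K) • e2 + f2 := by
          rw [smul_eq_C_mul, smul_eq_C_mul, he2, hf2]
          simp only [y, z, map_mul, map_neg, map_ofNat]
          ring
        have : (X 1 : S)^3 = (4*ε:K)⁻¹ • ((-3:K) • e2 + f2) := by
          rw [← hB, smul_smul, inv_mul_cancel₀ h4e, one_smul]
        rw [this]
        exact Submodule.smul_mem _ _ (Submodule.add_mem _
          (Submodule.smul_mem _ _ (Submodule.mem_sup_left he2m))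
          (Submodule.mem_sup_right hf2m))
      rw [homogeneousSubmodule_eq_finsupp_supported, AddMonoidAlgebra.supported_eq_span_single]
      rw [Submodule.span_le]
      rintro _ ⟨d, hd, rfl⟩
      have hdeg : d 0 + d 1 = 3 := by
        have h := hd
        simp only [Set.mem_setOf_eq, Finsupp.degree_apply] at h
        rw [← h]
        rw [Finset.sum_subset (Finset.subset_univ d.support)
          (fun i _ hi => Finsupp.notMem_support_iff.mp hi), Fin.sum_univ_two]
      have hmono : (AddMonoidAlgebra.single d 1 : S) = (X 0 : S) ^ (d 0) * (X 1 : S) ^ (d 1) := by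
        rw [single_eq_monomial, monomial_eq, Finsupp.prod_fintype _ _ (fun i => pow_zero _),
          Fin.prod_univ_two, map_one, one_mul]
      show (AddMonoidAlgebra.single d 1 : S) ∈ V₁ ⊔ V₂
      rw [hmono]
      have hle : d 0 ≤ 3 := by omega
      interval_cases h0 : d 0
      · have h1 : d 1 = 3 := by omega
        rw [h1]; simpa using hm4
      · have h1 : d 1 = 2 := by omega
        rw [h1]; simpa using hm3
      · have h1 : d 1 = 1 := by omega
        rw [h1]; simpa using hm2
      · have h1 : d 1 = 0 := by omega
        rw [h1]; simpa using hm1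
  · -- trivial intersection
    rw [eq_bot_iff]
    rintro x hx
    rw [Submodule.mem_inf] at hx
    obtain ⟨m, n, hmn⟩ := Submodule.mem_span_pair.mp hx.1
    obtain ⟨p, q, hpq⟩ := Submodule.mem_span_pair.mp hx.2
    have E : m • e1 + n • e2 = p • f1 + q • f2 := by rw [hmn, hpq]
    have E1 := congrArg (aeval ![(1:K), (0:K)]) E
    have E2 := congrArg (aeval ![(0:K), (1:K)]) E
    have E3 := congrArg (aeval ![(1:K), (1:K)]) E
    have E4 := congrArg (aeval ![(1:K), (-1:K)]) E
    simp only [he1, he2, hf1, hf2, y, z, map_add, map_smul, map_mul, map_sub, map_pow,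
      map_ofNat, aeval_X, aeval_C, algebraMap_eq, Matrix.cons_val_zero, Matrix.cons_val_one,
      Matrix.head_cons, smul_eq_mul, Algebra.algebraMap_self_apply] at E1 E2 E3 E4
    -- now pure scalar equations
    have hm : (8:K) * ε * m = 0 := by linear_combination (2+6*ε)*E1 - E3 - E4
    have h8e : (8:K) * ε ≠ 0 := by
      refine mul_ne_zero ?_ hε
      have h : (8:K) = 2*4 := by norm_num
      rw [h]; exact mul_ne_zero h2 h4
    have hm0 : m = 0 := by
      rcases mul_eq_zero.mp hm with h | h
      · exact absurd h h8e
      · exact h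
    have hq : (8:K) * ε * q = 0 := by linear_combination (2*ε-2)*E2 - ε*E3 + ε*E4
    have hq0 : q = 0 := by
      rcases mul_eq_zero.mp hq with h | h
      · exact absurd h h8e
      · exact h
    have hn0 : n = 0 := by
      have hn : ε * n = 0 := by linear_combination -E2 - ε*hq0
      rcases mul_eq_zero.mp hn with h | h
      · exact absurd h hε
      · exact h
    rw [Submodule.mem_bot, ← hmn, hm0, hn0, zero_smul, zero_smul, add_zero]

end Aux

/-- Let `K` be a field of characteristic ≠ 2 with `ε ∈ K` a non-square,
and let `V` be the space of homogeneous cubics in `y, z`.  For `a, b ∈ K`, let `R(a,b)`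
act on `V` by the substitution `y ↦ a·y + εb·z`, `z ↦ b·y + a·z` followed by
multiplication by `(a² - εb²)`.  Then `V₁ = span{y(y²-εz²), z(y²-εz²)}` and
`V₂ = span{y(y²+3εz²), z(3y²+εz²)}` are invariant under all `R(a,b)` with
`a² - εb² ≠ 0`, and `V = V₁ ⊕ V₂`. -/
theorem binary_cubics_decompose_under_rotations
    {K : Type*} [Field K] (hch : ringChar K ≠ 2)
    (ε : K) (hε : ε ≠ 0) (hsq : ¬∃ u : K, u ^ 2 = ε) :
    letI S := MvPolynomial (Fin 2) K
    letI y : S := X 0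
    letI z : S := X 1
    letI V₁ : Submodule K S :=
      Submodule.span K {y * (y ^ 2 - C ε * z ^ 2), z * (y ^ 2 - C ε * z ^ 2)}
    letI V₂ : Submodule K S :=
      Submodule.span K {y * (y ^ 2 + 3 * C ε * z ^ 2), z * (3 * y ^ 2 + C ε * z ^ 2)}
    letI act : K → K → S → S := fun a b P =>
      C (a ^ 2 - ε * b ^ 2) *
        (aeval ![C a * y + C (ε * b) * z, C b * y + C a * z] P)
    (∀ a b : K, a ^ 2 - ε * b ^ 2 ≠ 0 →
        (∀ P ∈ V₁, act a b P ∈ V₁) ∧ (∀ P ∈ V₂, act a b P ∈ V₂)) ∧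
      V₁ ⊔ V₂ = homogeneousSubmodule (Fin 2) K 3 ∧ V₁ ⊓ V₂ = ⊥ := by
  exact key_statement hch ε hε
end

section
/- Let K be a field of characteristic not 2, ε ∈ K^× a non-square, and let the group C̃ = {R(a,b) : a,b ∈ K, a² - εb² ≠ 0} act on the 2-dimensional space V₁ with basis {y(y² - εz²), z(y² - εz²)} by the action in which R(a,b) sends y(y² - εz²) to (a² - εb²)(a·y(y² - εz²) + εb·z(y² - εz²)). Then V₁ decomposes into exactly the orbits of δ·y(y² - εz²) where δ ranges over {0} together with a set of representatives of K^×/(K^×)³; i.e., every element α·y(y² - εz²) + β·z(y² - εz²) lies in the orbit of δ·y(y² - εz²) for some such δ. -/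
/-!
Identify `α·y(y²-εz²) + β·z(y²-εz²)` with `x = α + (β/ε)√ε` in `K(√ε)`; then `R(a,b)` sends
`δ·y(y²-εz²)` to `δ·N(w)·w` with `w = a + b√ε` and `N` the norm. Every `x ≠ 0` equals
`N(x)⁻¹ · N(x)·x`, and since `N(c·x)·(c·x) = c³·N(x)·x` for `c ∈ K`, writing `N(x)⁻¹ = δc³` gives
`x = δ·N(c·x)·(c·x)`. The norm of `x ≠ 0` is nonzero because `ε` is not a square.
-/

theorem sq_sub_mul_sq_ne_zero {K : Type*} [Field K] {ε : K} (hε : ¬IsSquare ε) {a b : K}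
    (hab : a ≠ 0 ∨ b ≠ 0) : a ^ 2 - ε * b ^ 2 ≠ 0 := by
  intro h
  by_cases hb : b = 0
  · subst hb
    exact hab.elim (fun ha => ha (by simpa using h)) (fun hb => hb rfl)
  · exact hε ⟨a / b, by field_simp; linear_combination -h⟩

theorem eq_mul_norm_mul_of_inv_norm_eq {K : Type*} [Field K] {ε a b δ c : K}
    (hN : a ^ 2 - ε * b ^ 2 ≠ 0) (hδc : (a ^ 2 - ε * b ^ 2)⁻¹ = δ * c ^ 3) :
    a = δ * ((c * a) ^ 2 - ε * (c * b) ^ 2) * (c * a) ∧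
      b = δ * ((c * a) ^ 2 - ε * (c * b) ^ 2) * (c * b) := by
  have hδ : δ * c ^ 3 * (a ^ 2 - ε * b ^ 2) = 1 := by rw [← hδc, inv_mul_cancel₀ hN]
  exact ⟨by linear_combination (-a) * hδ, by linear_combination (-b) * hδ⟩

theorem orbits_in_V1_of_rotation_group_general
    {K : Type*} [Field K]
    (ε : K) (hsq : ¬∃ u : K, u ^ 2 = ε)
    -- `D` is `{0}` together with a set of representatives of `K^×/(K^×)³`
    (D : Set K) (hD0 : (0 : K) ∈ D)
    (hDrep : ∀ u : K, u ≠ 0 → ∃ δ ∈ D, δ ≠ 0 ∧ ∃ c : K, c ≠ 0 ∧ u = δ * c ^ 3)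
    (α β : K) :
    ∃ δ ∈ D, ∃ a b : K, a ^ 2 - ε * b ^ 2 ≠ 0 ∧
      α = δ * (a ^ 2 - ε * b ^ 2) * a ∧ β = ε * δ * (a ^ 2 - ε * b ^ 2) * b := by
  have hε : ¬IsSquare ε := fun ⟨r, hr⟩ => hsq ⟨r, by rw [hr, sq]⟩
  have hε0 : ε ≠ 0 := by rintro rfl; exact hε IsSquare.zero
  by_cases hx : α = 0 ∧ β = 0
  · exact ⟨0, hD0, 1, 0, by norm_num, by simp [hx.1], by simp [hx.2]⟩
  have hN : α ^ 2 - ε * (β / ε) ^ 2 ≠ 0 := by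
    refine sq_sub_mul_sq_ne_zero hε ?_
    rw [not_and_or] at hx
    exact hx.imp_right (div_ne_zero · hε0)
  obtain ⟨δ, hδD, -, c, hc, hδc⟩ := hDrep _ (inv_ne_zero hN)
  obtain ⟨hα, hβ⟩ := eq_mul_norm_mul_of_inv_norm_eq hN hδc
  refine ⟨δ, hδD, c * α, c * (β / ε), ?_, hα, ?_⟩
  · rw [show (c * α) ^ 2 - ε * (c * (β / ε)) ^ 2 = c ^ 2 * (α ^ 2 - ε * (β / ε) ^ 2) by ring]
    exact mul_ne_zero (pow_ne_zero 2 hc) hN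
  · calc β = ε * (β / ε) := (mul_div_cancel₀ β hε0).symm
      _ = _ := by nth_rewrite 1 [hβ]; ring

/-- Let `K` be a field of characteristic ≠ 2, `ε ∈ K^×` a non-square,
and let the group `C̃ = {R(a,b) : a² - εb² ≠ 0}` act on the 2-dimensional space `V₁`
with basis `{y(y²-εz²), z(y²-εz²)}`, where `R(a,b)` sends `y(y²-εz²)` to
`(a²-εb²)(a·y(y²-εz²) + εb·z(y²-εz²))`.  Then every element
`α·y(y²-εz²) + β·z(y²-εz²)` lies in the orbit of `δ·y(y²-εz²)` for some `δ` in
`{0}` together with a set of representatives of `K^×/(K^×)³`.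
(In coordinates: `α = δ(a²-εb²)a` and `β = εδ(a²-εb²)b`.) -/
theorem orbits_in_V1_of_rotation_group
    {K : Type*} [Field K] (hch : ringChar K ≠ 2)
    (ε : K) (hε : ε ≠ 0) (hsq : ¬∃ u : K, u ^ 2 = ε)
    -- `D` is `{0}` together with a set of representatives of `K^×/(K^×)³`
    (D : Set K) (hD0 : (0 : K) ∈ D)
    (hDrep : ∀ u : K, u ≠ 0 → ∃ δ ∈ D, δ ≠ 0 ∧ ∃ c : K, c ≠ 0 ∧ u = δ * c ^ 3)
    (α β : K) :
    ∃ δ ∈ D, ∃ a b : K, a ^ 2 - ε * b ^ 2 ≠ 0 ∧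
      α = δ * (a ^ 2 - ε * b ^ 2) * a ∧ β = ε * δ * (a ^ 2 - ε * b ^ 2) * b :=
  orbits_in_V1_of_rotation_group_general ε hsq D hD0 hDrep α β
end

section
/- Suppose there exists a superspecial curve C of genus g over an algebraically closed field k of characteristic p with g > (p² + 1)/(2p). Then there exists a maximal curve X of genus g over F_{p²} (i.e., a curve with exactly p² + 1 + 2gp rational points over F_{p²}) such that X ×_{F_{p²}} k is isomorphic to C. -/
/-! Ekedahl's descent yields a curve over `F_{p²}` with `p² + 1 ± 2gp` points; the genus bound
makes `p² + 1 - 2gp` negative, so the sign must be `+`. -/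

theorem sq_add_one_lt_two_mul_mul_of_div_lt {p g : ℕ} (hp : 0 < p)
    (h : ((p : ℚ) ^ 2 + 1) / (2 * p) < g) : (p : ℤ) ^ 2 + 1 < 2 * g * p := by
  have hp' : (0 : ℚ) < 2 * p := by positivity
  rw [div_lt_iff₀ hp'] at h
  exact_mod_cast (by linarith : ((p : ℚ) ^ 2 + 1) < 2 * g * p)

theorem superspecial_implies_maximal_curve_general
    (p g : ℕ) (hp : p.Prime)
    (Curve_k Curve_Fp2 : Type*)
    (count : Curve_Fp2 → ℕ)
    (baseChange : Curve_Fp2 → Curve_k)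
    (IsoOver_k : Curve_k → Curve_k → Prop)
    (C : Curve_k)
    -- Ekedahl's descent (proof of [Ekedahl], Theorem 1.1):
    (hdescent : ∃ X : Curve_Fp2, IsoOver_k (baseChange X) C ∧
        ((count X : ℤ) = p ^ 2 + 1 + 2 * g * p ∨
          (count X : ℤ) = (p : ℤ) ^ 2 + 1 - 2 * g * p))
    -- the genus bound `g > (p² + 1)/(2p)`:
    (hbound : ((p : ℚ) ^ 2 + 1) / (2 * p) < g) :
    ∃ X : Curve_Fp2, count X = p ^ 2 + 1 + 2 * g * p ∧
      IsoOver_k (baseChange X) C := by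
  obtain ⟨X, hiso, hmax | hmin⟩ := hdescent
  · exact ⟨X, by exact_mod_cast hmax, hiso⟩
  · have hneg := sq_add_one_lt_two_mul_mul_of_div_lt hp.pos hbound
    omega

/-- Suppose there exists a superspecial curve `C` of genus `g` over an
algebraically closed field `k` of characteristic `p` with `g > (p² + 1)/(2p)`.  Then
there exists a maximal curve `X` of genus `g` over `F_{p²}` (i.e. a curve with exactly
`p² + 1 + 2gp` rational points over `F_{p²}`) such that `X ×_{F_{p²}} k ≅ C`.

The theorem is stated abstractly over a type `Curve_k` of (genus-`g`) curves over `k`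
and a type `Curve_Fp2` of (genus-`g`) curves over `F_{p²}`, with `count X` the number
of `F_{p²}`-rational points of `X`, `baseChange X = X ×_{F_{p²}} k`, and `IsoOver_k`
isomorphism of curves over `k`.  Ekedahl's descent result — every superspecial curve
over `k` descends to a curve `X` over `F_{p²}` with `#X(F_{p²}) = p² + 1 ± 2gp` — is
taken as a hypothesis. -/
theorem superspecial_implies_maximal_curve
    (p g : ℕ) (hp : p.Prime) (hg0 : 0 < g)
    (Curve_k Curve_Fp2 : Type*)
    (count : Curve_Fp2 → ℕ)
    (baseChange : Curve_Fp2 → Curve_k)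
    (IsoOver_k : Curve_k → Curve_k → Prop)
    (IsSuperspecial : Curve_k → Prop)
    (C : Curve_k) (hss : IsSuperspecial C)
    -- Ekedahl's descent (proof of [Ekedahl], Theorem 1.1):
    (hdescent : ∃ X : Curve_Fp2, IsoOver_k (baseChange X) C ∧
        ((count X : ℤ) = p ^ 2 + 1 + 2 * g * p ∨
          (count X : ℤ) = (p : ℤ) ^ 2 + 1 - 2 * g * p))
    -- the genus bound `g > (p² + 1)/(2p)`:
    (hbound : ((p : ℚ) ^ 2 + 1) / (2 * p) < g) :
    ∃ X : Curve_Fp2, count X = p ^ 2 + 1 + 2 * g * p ∧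
      IsoOver_k (baseChange X) C :=
  superspecial_implies_maximal_curve_general p g hp Curve_k Curve_Fp2 count baseChange IsoOver_k C
    hdescent hbound
end
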